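/- Let η be a sublinear measure of non-compactness on a dual Banach space X*. Then the ω-iterated measure η^ω is also a sublinear measure of non-compactness on X*. -/

import Mathlib

open Filter Topology Set Pointwise

noncomputable section

namespace Szlenk

variable {E : Type*}

/-- The fragment derivation `[η]'_ε(A)` associated to a set function `η`:
the points of `A` all of whose neighborhoods `U` satisfy `η (A ∩ cl U) ≥ ε`. -/
def frag [TopologicalSpace E] (η : Set E → ℝ) (ε : ℝ) (A : Set E) : Set E :=
  {x | x ∈ A ∧ ∀ U ∈ 𝓝 x, ε ≤ η (A ∩ closure U)}

/-- Transfinite iterates `[η]^γ_ε(A)` of the fragment derivation. -/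
def fragIter [TopologicalSpace E] (η : Set E → ℝ) (ε : ℝ) (A : Set E) (γ : Ordinal.{0}) :
    Set E :=
  Ordinal.limitRecOn γ A (fun _ S => frag η ε S)
    (fun γ _ ih => ⋂ β : {β : Ordinal.{0} // β < γ}, ih β.1 β.2)

/-- The `ω`-iterated measure `η^ω (A) = inf {ε > 0 : [η]^ω_ε(A) = ∅}`. -/
def etaOmega [TopologicalSpace E] (η : Set E → ℝ) (A : Set E) : ℝ :=
  sInf {ε : ℝ | 0 < ε ∧ fragIter η ε A Ordinal.omega0 = ∅}

/-- The iterates `η^{ω^n}` (with `η^{ω^0} := η` and `η^{ω^{n+1}} := (η^{ω^n})^ω`). -/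
def omegaPow [TopologicalSpace E] (η : Set E → ℝ) : ℕ → Set E → ℝ
  | 0 => η
  | n + 1 => etaOmega (omegaPow η n)

/-- `η` is a measure of non compactness (with respect to the closed unit ball `ball`):
it is nonnegative, vanishes on singletons, is monotone, satisfies
`η (A ∪ B) = max (η A) (η B)`, and `η (A + l • ball) ≤ η A + l * b` for some `b > 0`.
All conditions are required on (weak*-)compact sets only. -/
structure IsMNCOn [TopologicalSpace E] [AddCommGroup E] [Module ℝ E]
    (ball : Set E) (η : Set E → ℝ) : Prop where
  nonneg : ∀ A : Set E, IsCompact A → 0 ≤ η A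
  singleton : ∀ x : E, η {x} = 0
  mono : ∀ A B : Set E, IsCompact A → IsCompact B → A ⊆ B → η A ≤ η B
  union : ∀ A B : Set E, IsCompact A → IsCompact B → η (A ∪ B) = max (η A) (η B)
  ball_add : ∃ b > 0, ∀ A : Set E, IsCompact A → ∀ l : ℝ, 0 < l →
    η (A + l • ball) ≤ η A + l * b

/-- `η` is a measure of non compactness with the explicit constant `b` in property (iii). -/
structure IsMNCWith [TopologicalSpace E] [AddCommGroup E] [Module ℝ E]
    (ball : Set E) (b : ℝ) (η : Set E → ℝ) : Prop where
  b_pos : 0 < b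
  nonneg : ∀ A : Set E, IsCompact A → 0 ≤ η A
  singleton : ∀ x : E, η {x} = 0
  mono : ∀ A B : Set E, IsCompact A → IsCompact B → A ⊆ B → η A ≤ η B
  union : ∀ A B : Set E, IsCompact A → IsCompact B → η (A ∪ B) = max (η A) (η B)
  ball_add : ∀ A : Set E, IsCompact A → ∀ l : ℝ, 0 < l →
    η (A + l • ball) ≤ η A + l * b

/-- A sublinear measure of non compactness: homogeneous and subadditive. -/
structure IsSublinear [TopologicalSpace E] [AddCommGroup E] [Module ℝ E]
    (η : Set E → ℝ) : Prop where
  homog : ∀ (l : ℝ) (A : Set E), IsCompact A → η (l • A) = |l| * η A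
  subadd : ∀ A B : Set E, IsCompact A → IsCompact B → η (A + B) ≤ η A + η B

variable {X : Type*} [NormedAddCommGroup X] [NormedSpace ℝ X]

/-- The dual norm on `X*` (the dual being equipped with its weak* topology). -/
def dnorm (f : WeakDual ℝ X) : ℝ := ‖WeakDual.toStrongDual f‖

/-- The closed unit ball of `X*`. -/
def dualBall (X : Type*) [NormedAddCommGroup X] [NormedSpace ℝ X] :
    Set (WeakDual ℝ X) := {f | dnorm f ≤ 1}

/-- The slice derivation `⟨η⟩'_ε(A)`: the points of `A` such that every weak*-closed
halfspace containing them meets `A` in a set of `η`-measure at least `ε`. -/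
def sliceD (η : Set (WeakDual ℝ X) → ℝ) (ε : ℝ) (A : Set (WeakDual ℝ X)) :
    Set (WeakDual ℝ X) :=
  {x | x ∈ A ∧ ∀ (f : X) (c : ℝ), c ≤ x f → ε ≤ η (A ∩ {y | c ≤ y f})}

/-- Transfinite iterates `⟨η⟩^γ_ε(A)` of the slice derivation. -/
def sliceIter (η : Set (WeakDual ℝ X) → ℝ) (ε : ℝ) (A : Set (WeakDual ℝ X))
    (γ : Ordinal.{0}) : Set (WeakDual ℝ X) :=
  Ordinal.limitRecOn γ A (fun _ S => sliceD η ε S)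
    (fun γ _ ih => ⋂ β : {β : Ordinal.{0} // β < γ}, ih β.1 β.2)

/-- A weak*-closed halfspace of `X*`. -/
def IsHalfspace (H : Set (WeakDual ℝ X)) : Prop :=
  ∃ (f : X) (c : ℝ), H = {y : WeakDual ℝ X | c ≤ y f}

/-- The Kuratowski measure of non compactness associated to a (dual) norm `Nd`:
the infimum of all `ε > 0` such that `A` can be covered by finitely many balls of
diameter `ε` (i.e. of radius `ε / 2`). -/
def kurN (Nd : WeakDual ℝ X → ℝ) (A : Set (WeakDual ℝ X)) : ℝ :=
  sInf {ε : ℝ | 0 < ε ∧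
    ∃ F : Finset (WeakDual ℝ X), A ⊆ ⋃ c ∈ F, {y | Nd (y - c) ≤ ε / 2}}

/-- The Kuratowski measure of non compactness on `X*`. -/
def kur (A : Set (WeakDual ℝ X)) : ℝ := kurN dnorm A

/-- The iterated sets `A^ε_β` of the convex Szlenk derivation:
`A^ε_{β+1}` is the weak*-closed convex hull of `[σ]'_ε(A^ε_β)`. -/
def convIter (ε : ℝ) (K : Set (WeakDual ℝ X)) (γ : Ordinal.{0}) : Set (WeakDual ℝ X) :=
  Ordinal.limitRecOn γ K (fun _ S => closure (convexHull ℝ (frag kur ε S)))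
    (fun γ _ ih => ⋂ β : {β : Ordinal.{0} // β < γ}, ih β.1 β.2)

/-- The families `𝒯_α` of trees on `ℕ`. A tree is a set of finite sequences of
naturals (closed under initial segments); the root is the empty sequence, and
`(n)⌢s` is represented by `n :: s`. `𝒯_0 = {{∅}}`, and `T ∈ 𝒯_α` for `α ≥ 1` if
`T = {∅} ∪ ⋃_k (n_k)⌢T_k` with `n_k` strictly increasing, `T_k ∈ 𝒯_{α_k}`, where
`α_k = β` for all `k` if `α = β + 1`, and `α_k ↗ α` if `α` is a limit ordinal. -/
inductive IsTreeFam : Ordinal.{0} → Set (List ℕ) → Prop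
  | zero : IsTreeFam 0 {[]}
  | node {α : Ordinal.{0}} (nk : ℕ → ℕ) (αk : ℕ → Ordinal.{0}) (Tk : ℕ → Set (List ℕ))
      (hnk : StrictMono nk) (hTk : ∀ k, IsTreeFam (αk k) (Tk k))
      (hα : (∃ β, α = β + 1 ∧ ∀ k, αk k = β) ∨
            (Order.IsSuccLimit α ∧ StrictMono αk ∧ α = ⨆ k, αk k)) :
      IsTreeFam α ({[]} ∪ ⋃ k, (List.cons (nk k)) '' Tk k)

/-- A family `(x_s)_{s ∈ T}` is weak*-continuous: `x_{s⌢n} → x_s` (in the ambient,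
i.e. weak*, topology) along the children of every node `s` of `T`. -/
def IsContFam [TopologicalSpace E] (T : Set (List ℕ)) (x : List ℕ → E) : Prop :=
  ∀ s ∈ T, Tendsto (fun n : ℕ => x (s ++ [n]))
    (atTop ⊓ 𝓟 {n : ℕ | s ++ [n] ∈ T}) (𝓝 (x s))

/-- A family `(x_s)_{s ∈ T}` in `X*` is `ε`-separated: `‖x_s - x_{s⌢n}‖ ≥ ε`. -/
def IsSepFam (ε : ℝ) (T : Set (List ℕ)) (x : List ℕ → WeakDual ℝ X) : Prop :=
  ∀ s ∈ T, ∀ n : ℕ, s ++ [n] ∈ T → ε ≤ dnorm (x s - x (s ++ [n]))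

/-- Norm distance from a point of `X*` to a subset of `X*`. -/
def ddist (f : WeakDual ℝ X) (A : Set (WeakDual ℝ X)) : ℝ :=
  sInf ((fun g => dnorm (f - g)) '' A)

/-- The product `η₁ × η₂` of two measures of non compactness. -/
def prodMNC {X₁ X₂ : Type*} [NormedAddCommGroup X₁] [NormedSpace ℝ X₁]
    [NormedAddCommGroup X₂] [NormedSpace ℝ X₂]
    (η₁ : Set (WeakDual ℝ X₁) → ℝ) (η₂ : Set (WeakDual ℝ X₂) → ℝ)
    (A : Set (WeakDual ℝ X₁ × WeakDual ℝ X₂)) : ℝ :=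
  sInf {ε : ℝ | 0 < ε ∧ ∃ (n : ℕ) (A₁ : Fin n → Set (WeakDual ℝ X₁))
      (A₂ : Fin n → Set (WeakDual ℝ X₂)),
      (∀ i, IsCompact (A₁ i) ∧ IsCompact (A₂ i) ∧ η₁ (A₁ i) < ε ∧ η₂ (A₂ i) < ε) ∧
      A ⊆ ⋃ i, A₁ i ×ˢ A₂ i}

/-- The dual norm on `X*` associated to an (equivalent) norm `N` on `X`. -/
def dualNormOf (N : X → ℝ) (f : WeakDual ℝ X) : ℝ :=
  sSup ((fun x => f x) '' {x : X | N x ≤ 1})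

/-- The closed unit ball of the dual norm associated to a norm `N` on `X`. -/
def dualBallOf (N : X → ℝ) : Set (WeakDual ℝ X) :=
  {f : WeakDual ℝ X | ∀ x : X, |f x| ≤ N x}

/-!
For compact `A` the sets `[η]^n_ε(A)` are compact and decreasing, so `[η]^ω_ε(A) = ∅` iff some
finite iterate is empty, and `η^ω(A)` is the infimum of the `ε` for which the derivation stops after
finitely many steps. Monotonicity and the max-property pass to `η^ω` because the derivation is
monotone and `[η]'_ε(A ∪ B) ⊆ [η]'_ε(A) ∪ [η]'_ε(B)`. Homogeneity comes from
`[η]'_{|l|ε}(lA) = l [η]'_ε(A)`, and subadditivity from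
`[η]'_{ε+δ}(A + B) ⊆ ([η]'_ε(A) + B) ∪ (A + [η]'_δ(B))`, which iterates to
`[η]^{n+m}_{ε+δ}(A + B) = ∅` whenever `[η]^n_ε(A) = ∅ = [η]^m_δ(B)`. Property (iii) then follows from
sublinearity, with `b = η^ω(B_{X*}) + 1`, since the dual ball is weak*-compact.
-/

section FragBasic

variable [TopologicalSpace E] {η : Set E → ℝ} {ε ε' : ℝ} {A B : Set E}

theorem frag_subset : frag η ε A ⊆ A := fun _ hx => hx.1

theorem frag_eq_empty_of_lt (h : η A < ε) : frag η ε A = ∅ :=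
  eq_empty_of_forall_notMem fun _ hx =>
    (hx.2 univ univ_mem).not_gt (by rwa [closure_univ, inter_univ])

theorem eta_inter_closure_mono (hmono : MonotoneOn η {K | IsCompact K}) (hA : IsCompact A)
    {U V : Set E} (hUV : U ⊆ V) : η (A ∩ closure U) ≤ η (A ∩ closure V) :=
  hmono (hA.inter_right isClosed_closure) (hA.inter_right isClosed_closure)
    (inter_subset_inter_right _ (closure_mono hUV))

theorem exists_isOpen_lt_of_notMem_frag (hmono : MonotoneOn η {K | IsCompact K})
    (hA : IsCompact A) {x : E} (hxA : x ∈ A) (hx : x ∉ frag η ε A) :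
    ∃ U, IsOpen U ∧ x ∈ U ∧ η (A ∩ closure U) < ε := by
  obtain ⟨U, hU, hUε⟩ : ∃ U ∈ 𝓝 x, η (A ∩ closure U) < ε := by
    by_contra! h
    exact hx ⟨hxA, h⟩
  exact ⟨interior U, isOpen_interior, mem_interior_iff_mem_nhds.2 hU,
    (eta_inter_closure_mono hmono hA interior_subset).trans_lt hUε⟩

theorem frag_mono (hmono : MonotoneOn η {K | IsCompact K}) (hA : IsCompact A)
    (hB : IsCompact B) (hAB : A ⊆ B) (hε : ε ≤ ε') : frag η ε' A ⊆ frag η ε B :=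
  fun _ ⟨hxA, hx⟩ => ⟨hAB hxA, fun U hU => hε.trans <| (hx U hU).trans <|
    hmono (hA.inter_right isClosed_closure) (hB.inter_right isClosed_closure)
      (inter_subset_inter_left _ hAB)⟩

variable [T2Space E]

theorem isClosed_frag (hmono : MonotoneOn η {K | IsCompact K}) (hA : IsCompact A) :
    IsClosed (frag η ε A) := by
  have h : frag η ε A = A \ ⋃₀ {U | IsOpen U ∧ η (A ∩ closure U) < ε} := by
    ext x
    refine ⟨fun hx => ⟨hx.1, ?_⟩, fun hx => ?_⟩
    · rintro ⟨U, ⟨hUo, hUε⟩, hxU⟩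
      exact (hx.2 U (hUo.mem_nhds hxU)).not_gt hUε
    · by_contra hxf
      obtain ⟨U, hUo, hxU, hUε⟩ := exists_isOpen_lt_of_notMem_frag hmono hA hx.1 hxf
      exact hx.2 ⟨U, ⟨hUo, hUε⟩, hxU⟩
  rw [h]
  exact hA.isClosed.sdiff (isOpen_sUnion fun U hU => hU.1)

theorem isCompact_frag (hmono : MonotoneOn η {K | IsCompact K}) (hA : IsCompact A) :
    IsCompact (frag η ε A) :=
  hA.of_isClosed_subset (isClosed_frag hmono hA) frag_subset

theorem isCompact_iterate_frag (hmono : MonotoneOn η {K | IsCompact K}) (hA : IsCompact A)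
    (n : ℕ) : IsCompact ((frag η ε)^[n] A) := by
  induction n with
  | zero => exact hA
  | succ n ih =>
    rw [Function.iterate_succ_apply']
    exact isCompact_frag hmono ih

theorem iterate_frag_mono (hmono : MonotoneOn η {K | IsCompact K}) (hA : IsCompact A)
    (hB : IsCompact B) (hAB : A ⊆ B) (hε : ε ≤ ε') (n : ℕ) :
    (frag η ε')^[n] A ⊆ (frag η ε)^[n] B := by
  induction n with
  | zero => exact hAB
  | succ n ih =>
    simp only [Function.iterate_succ_apply']
    exact frag_mono hmono (isCompact_iterate_frag hmono hA n)
      (isCompact_iterate_frag hmono hB n) ih hε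

end FragBasic

theorem antitone_iterate_frag [TopologicalSpace E] (η : Set E → ℝ) (ε : ℝ) (A : Set E) :
    Antitone fun n => (frag η ε)^[n] A :=
  antitone_nat_of_succ_le fun n => by
    rw [Function.iterate_succ_apply']
    exact frag_subset

section FragUnion

variable [TopologicalSpace E] [T2Space E] [RegularSpace E] {η : Set E → ℝ} {ε : ℝ} {A B : Set E}

theorem mem_frag_of_mem_frag_union (hmono : MonotoneOn η {K | IsCompact K})
    (hA : IsCompact A) (hB : IsCompact B) {x : E} (hx : x ∈ frag η ε (A ∪ B)) (hxA : x ∈ A)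
    (hxB : x ∉ B) : x ∈ frag η ε A := by
  obtain ⟨V, hV, hVc, hVB⟩ :=
    exists_mem_nhds_isClosed_subset (hB.isClosed.isOpen_compl.mem_nhds hxB)
  refine ⟨hxA, fun U hU => ?_⟩
  have hdisj : closure (U ∩ V) ⊆ Bᶜ :=
    (closure_mono inter_subset_right).trans (hVc.closure_eq.symm ▸ hVB)
  have htrace : (A ∪ B) ∩ closure (U ∩ V) = A ∩ closure (U ∩ V) := by
    rw [union_inter_distrib_right, union_eq_left]
    exact fun y hy => absurd hy.1 (hdisj hy.2)
  calc ε ≤ η (A ∩ closure (U ∩ V)) := htrace ▸ hx.2 (U ∩ V) (inter_mem hU hV)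
    _ ≤ η (A ∩ closure U) := eta_inter_closure_mono hmono hA inter_subset_left

theorem frag_union_subset (hmono : MonotoneOn η {K | IsCompact K})
    (hunion : ∀ A B : Set E, IsCompact A → IsCompact B → η (A ∪ B) = max (η A) (η B))
    (hA : IsCompact A) (hB : IsCompact B) :
    frag η ε (A ∪ B) ⊆ frag η ε A ∪ frag η ε B := by
  intro x hx
  by_cases hxB : x ∈ B
  swap
  · exact Or.inl (mem_frag_of_mem_frag_union hmono hA hB hx
      (hx.1.resolve_right hxB) hxB)
  by_cases hxA : x ∈ A
  swap
  · exact Or.inr (mem_frag_of_mem_frag_union hmono hB hA (union_comm A B ▸ hx) hxB hxA)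
  by_contra hxf
  rw [mem_union, not_or] at hxf
  obtain ⟨U, hUo, hxU, hUε⟩ := exists_isOpen_lt_of_notMem_frag hmono hA hxA hxf.1
  obtain ⟨V, hVo, hxV, hVε⟩ := exists_isOpen_lt_of_notMem_frag hmono hB hxB hxf.2
  have hsmall : η ((A ∪ B) ∩ closure (U ∩ V)) < ε := by
    rw [union_inter_distrib_right, hunion _ _ (hA.inter_right isClosed_closure)
      (hB.inter_right isClosed_closure)]
    exact max_lt ((eta_inter_closure_mono hmono hA inter_subset_left).trans_lt hUε)
      ((eta_inter_closure_mono hmono hB inter_subset_right).trans_lt hVε)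
  exact (hx.2 _ (inter_mem (hUo.mem_nhds hxU) (hVo.mem_nhds hxV))).not_gt hsmall

theorem iterate_frag_union_subset (hmono : MonotoneOn η {K | IsCompact K})
    (hunion : ∀ A B : Set E, IsCompact A → IsCompact B → η (A ∪ B) = max (η A) (η B))
    (hA : IsCompact A) (hB : IsCompact B) (n : ℕ) :
    (frag η ε)^[n] (A ∪ B) ⊆ (frag η ε)^[n] A ∪ (frag η ε)^[n] B := by
  induction n with
  | zero => exact subset_rfl
  | succ n ih =>
    have hAn := isCompact_iterate_frag (ε := ε) hmono hA n
    have hBn := isCompact_iterate_frag (ε := ε) hmono hB n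
    simp only [Function.iterate_succ_apply']
    exact (frag_mono hmono (isCompact_iterate_frag hmono (hA.union hB) n) (hAn.union hBn) ih
      le_rfl).trans (frag_union_subset hmono hunion hAn hBn)

theorem frag_biUnion_subset {ι : Type*} (hmono : MonotoneOn η {K | IsCompact K})
    (hunion : ∀ A B : Set E, IsCompact A → IsCompact B → η (A ∪ B) = max (η A) (η B))
    (t : Finset ι) {C : ι → Set E} (hC : ∀ i ∈ t, IsCompact (C i)) :
    frag η ε (⋃ i ∈ t, C i) ⊆ ⋃ i ∈ t, frag η ε (C i) := by
  classical
  induction t using Finset.induction with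
  | empty => simpa using frag_subset (η := η) (ε := ε) (A := ∅)
  | insert a s _ ih =>
    simp only [Finset.mem_insert, forall_eq_or_imp] at hC
    simp only [Finset.set_biUnion_insert]
    exact (frag_union_subset hmono hunion hC.1 (s.isCompact_biUnion hC.2)).trans
      (union_subset_union_right _ (ih hC.2))

end FragUnion

theorem eta_biUnion_lt_of_union_eq_max [TopologicalSpace E] {η : Set E → ℝ} {ι : Type*}
    (hunion : ∀ A B : Set E, IsCompact A → IsCompact B → η (A ∪ B) = max (η A) (η B))
    {t : Finset ι} (ht : t.Nonempty) {K : ι → Set E} (hK : ∀ i ∈ t, IsCompact (K i)) {c : ℝ}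
    (hlt : ∀ i ∈ t, η (K i) < c) : η (⋃ i ∈ t, K i) < c := by
  classical
  induction ht using Finset.Nonempty.cons_induction with
  | singleton a => simpa using hlt
  | cons a s _ hs ih =>
    simp only [Finset.mem_cons, forall_eq_or_imp] at hK hlt
    rw [Finset.cons_eq_insert, Finset.set_biUnion_insert,
      hunion _ _ hK.1 (s.isCompact_biUnion hK.2)]
    exact max_lt hlt.1 (ih hK.2 hlt.2)

theorem exists_mem_nhds_inter_preimage_closure_subset {α β : Type*} [TopologicalSpace α]
    [TopologicalSpace β] [T2Space β] [RegularSpace β] {f : α → β} (hf : Continuous f)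
    {K O : Set α} (hK : IsCompact K) (hO : IsOpen O) {y : β} (hKO : K ∩ f ⁻¹' {y} ⊆ O) :
    ∃ W ∈ 𝓝 y, K ∩ f ⁻¹' closure W ⊆ O := by
  have hy : y ∉ f '' (K \ O) := fun ⟨z, hz, hzy⟩ => hz.2 (hKO ⟨hz.1, hzy⟩)
  obtain ⟨W, hW, hWc, hWy⟩ := exists_mem_nhds_isClosed_subset
    (((hK.diff hO).image hf).isClosed.isOpen_compl.mem_nhds hy)
  refine ⟨W, hW, fun z hz => ?_⟩
  by_contra hzO
  exact hWy (hWc.closure_eq ▸ hz.2) ⟨z, ⟨hz.1, hzO⟩, rfl⟩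

section FragAdd

open Finset.HasAntidiagonal

variable [TopologicalSpace E] [T2Space E] [RegularSpace E] [AddCommGroup E] [ContinuousAdd E]
  {η : Set E → ℝ} {ε δ : ℝ} {A B : Set E}

/-- If no decomposition `x = a + b` has `a ∈ [η]'_ε A` or `b ∈ [η]'_δ B`, finitely many products
of small open pieces cover the compact set of decompositions of `x`, and a tube-lemma argument
gives a neighborhood of `x` whose trace on `A + B` has `η`-measure `< ε + δ`. -/
theorem frag_add_subset (hmono : MonotoneOn η {K | IsCompact K})
    (hunion : ∀ A B : Set E, IsCompact A → IsCompact B → η (A ∪ B) = max (η A) (η B))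
    (hsubadd : ∀ A B : Set E, IsCompact A → IsCompact B → η (A + B) ≤ η A + η B)
    (hA : IsCompact A) (hB : IsCompact B) :
    frag η (ε + δ) (A + B) ⊆ (frag η ε A + B) ∪ (A + frag η δ B) := by
  intro x hx
  by_contra hxf
  rw [mem_union, not_or] at hxf
  set D := A ×ˢ B ∩ (fun p : E × E => p.1 + p.2) ⁻¹' {x}
  have hsmall : ∀ p ∈ D, ∃ U V : Set E, IsOpen U ∧ IsOpen V ∧ p ∈ U ×ˢ V ∧
      η (A ∩ closure U) < ε ∧ η (B ∩ closure V) < δ := by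
    rintro ⟨a, b⟩ ⟨⟨ha, hb⟩, hab⟩
    obtain ⟨U, hUo, haU, hU⟩ := exists_isOpen_lt_of_notMem_frag hmono hA ha
      fun haf => hxf.1 ⟨a, haf, b, hb, hab⟩
    obtain ⟨V, hVo, hbV, hV⟩ := exists_isOpen_lt_of_notMem_frag hmono hB hb
      fun hbf => hxf.2 ⟨a, ha, b, hbf, hab⟩
    exact ⟨U, V, hUo, hVo, ⟨haU, hbV⟩, hU, hV⟩
  choose! U V hUo hVo hpUV hU hV using hsmall
  obtain ⟨t, htD, hDt⟩ :=
    ((hA.prod hB).inter_right (isClosed_singleton.preimage continuous_add)).elim_nhds_subcover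
      (fun p => U p ×ˢ V p) fun p hp => ((hUo p hp).prod (hVo p hp)).mem_nhds (hpUV p hp)
  obtain ⟨W, hW, hWt⟩ := exists_mem_nhds_inter_preimage_closure_subset continuous_add
    (hA.prod hB) (isOpen_biUnion fun p hp => (hUo p (htD p hp)).prod (hVo p (htD p hp))) hDt
  have hcover : (A + B) ∩ closure W ⊆ ⋃ p ∈ t, (A ∩ closure (U p)) + (B ∩ closure (V p)) := by
    rintro _ ⟨⟨a, ha, b, hb, rfl⟩, hab⟩
    obtain ⟨p, hp, haU, hbV⟩ := mem_iUnion₂.1 (@hWt (a, b) ⟨⟨ha, hb⟩, hab⟩)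
    exact mem_biUnion hp ⟨a, ⟨ha, subset_closure haU⟩, b, ⟨hb, subset_closure hbV⟩, rfl⟩
  have ht : t.Nonempty := by
    obtain ⟨a, ha, b, hb, hab⟩ := hx.1
    obtain ⟨p, hp, -⟩ := mem_iUnion₂.1 (@hDt (a, b) ⟨⟨ha, hb⟩, hab⟩)
    exact ⟨p, hp⟩
  have hpieces : ∀ p ∈ t, IsCompact ((A ∩ closure (U p)) + (B ∩ closure (V p))) :=
    fun p _ => (hA.inter_right isClosed_closure).add (hB.inter_right isClosed_closure)
  refine (hx.2 W hW).not_gt ?_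
  calc η ((A + B) ∩ closure W)
      ≤ η (⋃ p ∈ t, (A ∩ closure (U p)) + (B ∩ closure (V p))) :=
        hmono ((hA.add hB).inter_right isClosed_closure) (t.isCompact_biUnion hpieces) hcover
    _ < ε + δ := eta_biUnion_lt_of_union_eq_max hunion ht hpieces fun p hp =>
        (hsubadd _ _ (hA.inter_right isClosed_closure) (hB.inter_right isClosed_closure)).trans_lt
          (add_lt_add (hU p (htD p hp)) (hV p (htD p hp)))

theorem iterate_frag_add_subset (hmono : MonotoneOn η {K | IsCompact K})
    (hunion : ∀ A B : Set E, IsCompact A → IsCompact B → η (A ∪ B) = max (η A) (η B))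
    (hsubadd : ∀ A B : Set E, IsCompact A → IsCompact B → η (A + B) ≤ η A + η B)
    (hA : IsCompact A) (hB : IsCompact B) (n : ℕ) :
    (frag η (ε + δ))^[n] (A + B) ⊆
      ⋃ p ∈ antidiagonal n, (frag η ε)^[p.1] A + (frag η δ)^[p.2] B := by
  induction n with
  | zero => simp
  | succ n ih =>
    have hAi := isCompact_iterate_frag (ε := ε) hmono hA
    have hBj := isCompact_iterate_frag (ε := δ) hmono hB
    have hpieces : ∀ p ∈ antidiagonal n,
        IsCompact ((frag η ε)^[p.1] A + (frag η δ)^[p.2] B) :=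
      fun p _ => (hAi p.1).add (hBj p.2)
    rw [Function.iterate_succ_apply']
    refine (frag_mono hmono (isCompact_iterate_frag hmono (hA.add hB) n)
      (Finset.isCompact_biUnion _ hpieces) ih le_rfl).trans <|
      (frag_biUnion_subset hmono hunion _ hpieces).trans <| iUnion₂_subset fun p hp => ?_
    rw [Finset.HasAntidiagonal.mem_antidiagonal] at hp
    refine (frag_add_subset hmono hunion hsubadd (hAi p.1) (hBj p.2)).trans (union_subset ?_ ?_)
    · refine .trans ?_ (subset_biUnion_of_mem (x := (p.1 + 1, p.2))
        (u := fun q : ℕ × ℕ => (frag η ε)^[q.1] A + (frag η δ)^[q.2] B)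
        (Finset.HasAntidiagonal.mem_antidiagonal.2 (by simp only; omega)))
      simp only [Function.iterate_succ_apply', subset_rfl]
    · refine .trans ?_ (subset_biUnion_of_mem (x := (p.1, p.2 + 1))
        (u := fun q : ℕ × ℕ => (frag η ε)^[q.1] A + (frag η δ)^[q.2] B)
        (Finset.HasAntidiagonal.mem_antidiagonal.2 (by simp only; omega)))
      simp only [Function.iterate_succ_apply', subset_rfl]

theorem iterate_frag_add_eq_empty (hmono : MonotoneOn η {K | IsCompact K})
    (hunion : ∀ A B : Set E, IsCompact A → IsCompact B → η (A ∪ B) = max (η A) (η B))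
    (hsubadd : ∀ A B : Set E, IsCompact A → IsCompact B → η (A + B) ≤ η A + η B)
    (hA : IsCompact A) (hB : IsCompact B) {n m : ℕ} (hn : (frag η ε)^[n] A = ∅)
    (hm : (frag η δ)^[m] B = ∅) : (frag η (ε + δ))^[n + m] (A + B) = ∅ := by
  refine subset_empty_iff.1 <| (iterate_frag_add_subset hmono hunion hsubadd hA hB _).trans <|
    iUnion₂_subset fun p hp => ?_
  rw [Finset.HasAntidiagonal.mem_antidiagonal] at hp
  rcases le_or_gt n p.1 with h | h
  · have hAp : (frag η ε)^[p.1] A = ∅ :=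
      subset_empty_iff.1 ((antitone_iterate_frag η ε A h).trans hn.subset)
    rw [hAp, Set.empty_add]
  · have hBp : (frag η δ)^[p.2] B = ∅ :=
      subset_empty_iff.1 ((antitone_iterate_frag η δ B (by omega : m ≤ p.2)).trans hm.subset)
    rw [hBp, Set.add_empty]

end FragAdd

section FragSmul

variable [TopologicalSpace E] [T2Space E] [AddCommGroup E] [Module ℝ E] [ContinuousConstSMul ℝ E]
  {η : Set E → ℝ} {ε l : ℝ} {A : Set E}

theorem frag_smul_subset
    (hhomog : ∀ (l : ℝ) (A : Set E), IsCompact A → η (l • A) = |l| * η A)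
    (hl : l ≠ 0) (hA : IsCompact A) : frag η (|l| * ε) (l • A) ⊆ l • frag η ε A := by
  rintro _ ⟨⟨y, hy, rfl⟩, hx⟩
  refine ⟨y, ⟨hy, fun U hU => ?_⟩, rfl⟩
  have h := hx (l • U) (smul_mem_nhds_smul₀ hl hU)
  rwa [closure_smul₀, ← smul_set_inter₀ hl, hhomog l _ (hA.inter_right isClosed_closure),
    mul_le_mul_iff_right₀ (abs_pos.2 hl)] at h

theorem frag_smul (hhomog : ∀ (l : ℝ) (A : Set E), IsCompact A → η (l • A) = |l| * η A)
    (hl : l ≠ 0) (hA : IsCompact A) : frag η (|l| * ε) (l • A) = l • frag η ε A := by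
  refine (frag_smul_subset hhomog hl hA).antisymm ?_
  have h := frag_smul_subset (ε := |l| * ε) hhomog (inv_ne_zero hl) (hA.smul l)
  rw [inv_smul_smul₀ hl, abs_inv, inv_mul_cancel_left₀ (abs_ne_zero.2 hl)] at h
  exact (smul_set_mono h).trans (smul_inv_smul₀ hl _).subset

theorem iterate_frag_smul (hmono : MonotoneOn η {K | IsCompact K})
    (hhomog : ∀ (l : ℝ) (A : Set E), IsCompact A → η (l • A) = |l| * η A)
    (hl : l ≠ 0) (hA : IsCompact A) (n : ℕ) :
    (frag η (|l| * ε))^[n] (l • A) = l • (frag η ε)^[n] A := by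
  induction n with
  | zero => rfl
  | succ n ih =>
    simp only [Function.iterate_succ_apply']
    rw [ih, frag_smul hhomog hl (isCompact_iterate_frag hmono hA n)]

end FragSmul

section EtaOmega

variable [TopologicalSpace E] {η : Set E → ℝ} {ε c : ℝ} {A B : Set E}

theorem fragIter_natCast (η : Set E → ℝ) (ε : ℝ) (A : Set E) (n : ℕ) :
    fragIter η ε A n = (frag η ε)^[n] A := by
  induction n with
  | zero => exact Ordinal.limitRecOn_zero ..
  | succ n ih =>
    rw [Nat.cast_succ, fragIter, Ordinal.limitRecOn_add_one, Function.iterate_succ_apply', ← ih]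
    rfl

theorem fragIter_omega0 (η : Set E → ℝ) (ε : ℝ) (A : Set E) :
    fragIter η ε A Ordinal.omega0 = ⋂ n : ℕ, (frag η ε)^[n] A := by
  rw [fragIter, Ordinal.limitRecOn_limit _ _ _ _ Ordinal.isSuccLimit_omega0]
  ext x
  simp only [mem_iInter, Subtype.forall]
  refine ⟨fun h n => (fragIter_natCast η ε A n).le (h n (Ordinal.natCast_lt_omega0 n)),
    fun h β hβ => ?_⟩
  obtain ⟨n, rfl⟩ := Ordinal.lt_omega0.1 hβ
  exact (fragIter_natCast η ε A n).ge (h n)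

theorem fragIter_omega0_eq_empty {n : ℕ} (hn : (frag η ε)^[n] A = ∅) :
    fragIter η ε A Ordinal.omega0 = ∅ := by
  rw [fragIter_omega0]
  exact subset_empty_iff.1 ((iInter_subset _ n).trans hn.subset)

theorem etaOmega_nonneg (η : Set E → ℝ) (A : Set E) : 0 ≤ etaOmega η A :=
  Real.sInf_nonneg fun _ hε => hε.1.le

theorem etaOmega_le_of_iterate_eq_empty (hε : 0 < ε) {n : ℕ} (hn : (frag η ε)^[n] A = ∅) :
    etaOmega η A ≤ ε :=
  csInf_le ⟨0, fun _ hε => hε.1.le⟩ ⟨hε, fragIter_omega0_eq_empty hn⟩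

theorem etaOmega_le_of_forall_lt (hc : 0 ≤ c) (h : ∀ ε, c < ε → ∃ n, (frag η ε)^[n] A = ∅) :
    etaOmega η A ≤ c :=
  le_of_forall_gt_imp_ge_of_dense fun ε hε =>
    let ⟨_, hn⟩ := h ε hε
    etaOmega_le_of_iterate_eq_empty (hc.trans_lt hε) hn

theorem etaOmega_le_of_le (hc : 0 ≤ c) (h : η A ≤ c) : etaOmega η A ≤ c :=
  etaOmega_le_of_forall_lt hc fun _ hε => ⟨1, frag_eq_empty_of_lt (h.trans_lt hε)⟩

variable [T2Space E]

theorem exists_iterate_eq_empty_of_fragIter_omega0 (hmono : MonotoneOn η {K | IsCompact K})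
    (hA : IsCompact A) (h : fragIter η ε A Ordinal.omega0 = ∅) :
    ∃ n, (frag η ε)^[n] A = ∅ := by
  by_contra! hne
  rw [fragIter_omega0] at h
  exact (IsCompact.nonempty_iInter_of_sequence_nonempty_isCompact_isClosed _
    (fun n => antitone_iterate_frag η ε A n.le_succ) hne
    hA fun n => (isCompact_iterate_frag hmono hA n).isClosed).ne_empty h

theorem exists_iterate_eq_empty_of_etaOmega_lt (hmono : MonotoneOn η {K | IsCompact K})
    (hA : IsCompact A) (h : etaOmega η A < ε) : ∃ n, (frag η ε)^[n] A = ∅ := by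
  have hne : {ε | 0 < ε ∧ fragIter η ε A Ordinal.omega0 = ∅}.Nonempty :=
    ⟨|η A| + 1, by positivity, fragIter_omega0_eq_empty (n := 1)
      (frag_eq_empty_of_lt ((le_abs_self _).trans_lt (lt_add_one _)))⟩
  obtain ⟨ε', ⟨-, hε'⟩, hε'ε⟩ := exists_lt_of_csInf_lt hne h
  obtain ⟨n, hn⟩ := exists_iterate_eq_empty_of_fragIter_omega0 hmono hA hε'
  exact ⟨n, subset_empty_iff.1 ((iterate_frag_mono hmono hA hA subset_rfl hε'ε.le n).trans
    hn.subset)⟩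

theorem etaOmega_mono (hmono : MonotoneOn η {K | IsCompact K}) (hA : IsCompact A)
    (hB : IsCompact B) (hAB : A ⊆ B) : etaOmega η A ≤ etaOmega η B :=
  etaOmega_le_of_forall_lt (etaOmega_nonneg η B) fun _ hε =>
    (exists_iterate_eq_empty_of_etaOmega_lt hmono hB hε).imp fun n hn =>
      subset_empty_iff.1 ((iterate_frag_mono hmono hA hB hAB le_rfl n).trans hn.subset)

section Regular

variable [RegularSpace E]

theorem etaOmega_union (hmono : MonotoneOn η {K | IsCompact K})
    (hunion : ∀ A B : Set E, IsCompact A → IsCompact B → η (A ∪ B) = max (η A) (η B))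
    (hA : IsCompact A) (hB : IsCompact B) :
    etaOmega η (A ∪ B) = max (etaOmega η A) (etaOmega η B) := by
  refine le_antisymm ?_ (max_le (etaOmega_mono hmono hA (hA.union hB) subset_union_left)
    (etaOmega_mono hmono hB (hA.union hB) subset_union_right))
  refine etaOmega_le_of_forall_lt ((etaOmega_nonneg η A).trans (le_max_left _ _))
    fun ε hε => ?_
  obtain ⟨n, hn⟩ := exists_iterate_eq_empty_of_etaOmega_lt hmono hA (max_lt_iff.1 hε).1
  obtain ⟨m, hm⟩ := exists_iterate_eq_empty_of_etaOmega_lt hmono hB (max_lt_iff.1 hε).2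
  refine ⟨n + m, subset_empty_iff.1 ((iterate_frag_union_subset hmono hunion hA hB _).trans ?_)⟩
  exact union_subset ((antitone_iterate_frag η ε A (n.le_add_right m)).trans hn.subset)
    ((antitone_iterate_frag η ε B (m.le_add_left n)).trans hm.subset)

theorem etaOmega_add_le [AddCommGroup E] [ContinuousAdd E]
    (hmono : MonotoneOn η {K | IsCompact K})
    (hunion : ∀ A B : Set E, IsCompact A → IsCompact B → η (A ∪ B) = max (η A) (η B))
    (hsubadd : ∀ A B : Set E, IsCompact A → IsCompact B → η (A + B) ≤ η A + η B)
    (hA : IsCompact A) (hB : IsCompact B) :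
    etaOmega η (A + B) ≤ etaOmega η A + etaOmega η B := by
  refine etaOmega_le_of_forall_lt (add_nonneg (etaOmega_nonneg η A) (etaOmega_nonneg η B))
    fun c hc => ?_
  obtain ⟨ε, hAε, hεc⟩ := exists_between (lt_sub_iff_add_lt.2 hc)
  obtain ⟨n, hn⟩ := exists_iterate_eq_empty_of_etaOmega_lt hmono hA hAε
  obtain ⟨m, hm⟩ := exists_iterate_eq_empty_of_etaOmega_lt (ε := c - ε) hmono hB (by linarith)
  have h := iterate_frag_add_eq_empty hmono hunion hsubadd hA hB hn hm
  rw [add_sub_cancel] at h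
  exact ⟨n + m, h⟩

end Regular

variable [AddCommGroup E] [Module ℝ E] [ContinuousConstSMul ℝ E] {l : ℝ}

theorem etaOmega_smul_le (hmono : MonotoneOn η {K | IsCompact K})
    (hhomog : ∀ (l : ℝ) (A : Set E), IsCompact A → η (l • A) = |l| * η A)
    (hl : l ≠ 0) (hA : IsCompact A) : etaOmega η (l • A) ≤ |l| * etaOmega η A := by
  have hl' : 0 < |l| := abs_pos.2 hl
  refine etaOmega_le_of_forall_lt (mul_nonneg hl'.le (etaOmega_nonneg η A)) fun c hc => ?_
  obtain ⟨n, hn⟩ := exists_iterate_eq_empty_of_etaOmega_lt hmono hA ((lt_div_iff₀' hl').2 hc)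
  refine ⟨n, ?_⟩
  rw [← mul_div_cancel₀ c hl'.ne', iterate_frag_smul hmono hhomog hl hA, hn, smul_set_empty]

theorem etaOmega_smul (hmono : MonotoneOn η {K | IsCompact K})
    (hhomog : ∀ (l : ℝ) (A : Set E), IsCompact A → η (l • A) = |l| * η A)
    (l : ℝ) (hA : IsCompact A) : etaOmega η (l • A) = |l| * etaOmega η A := by
  rcases eq_or_ne l 0 with rfl | hl
  · rw [abs_zero, zero_mul]
    refine (etaOmega_le_of_le le_rfl ?_).antisymm (etaOmega_nonneg η _)
    rw [hhomog 0 A hA, abs_zero, zero_mul]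
  · refine (etaOmega_smul_le hmono hhomog hl hA).antisymm ?_
    have h := etaOmega_smul_le hmono hhomog (inv_ne_zero hl) (hA.smul l)
    rwa [inv_smul_smul₀ hl, abs_inv, le_inv_mul_iff₀ (abs_pos.2 hl)] at h

end EtaOmega

theorem IsMNCOn.monotoneOn [TopologicalSpace E] [AddCommGroup E] [Module ℝ E] {ball : Set E}
    {η : Set E → ℝ} (hη : IsMNCOn ball η) : MonotoneOn η {K | IsCompact K} :=
  fun A hA B hB => hη.mono A B hA hB

section MeasureOfNonCompactness

variable [TopologicalSpace E] [T2Space E] [RegularSpace E] [AddCommGroup E] [Module ℝ E]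
  [ContinuousAdd E] [ContinuousConstSMul ℝ E] {η : Set E → ℝ}

theorem isSublinear_etaOmega (hmono : MonotoneOn η {K | IsCompact K})
    (hunion : ∀ A B : Set E, IsCompact A → IsCompact B → η (A ∪ B) = max (η A) (η B))
    (hsub : IsSublinear η) : IsSublinear (etaOmega η) :=
  ⟨fun l _ hA => etaOmega_smul hmono hsub.homog l hA,
    fun _ _ hA hB => etaOmega_add_le hmono hunion hsub.subadd hA hB⟩

theorem isMNCOn_etaOmega {ball : Set E} (hball : IsCompact ball) (hη : IsMNCOn ball η)
    (hsub : IsSublinear η) : IsMNCOn ball (etaOmega η) := by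
  have hsubΩ := isSublinear_etaOmega hη.monotoneOn hη.union hsub
  refine ⟨fun A _ => etaOmega_nonneg η A,
    fun x => (etaOmega_le_of_le le_rfl (hη.singleton x).le).antisymm (etaOmega_nonneg η _),
    fun A B hA hB hAB => etaOmega_mono hη.monotoneOn hA hB hAB,
    fun A B hA hB => etaOmega_union hη.monotoneOn hη.union hA hB,
    etaOmega η ball + 1, by linarith [etaOmega_nonneg η ball], fun A hA l hl => ?_⟩
  calc etaOmega η (A + l • ball) ≤ etaOmega η A + etaOmega η (l • ball) :=
        hsubΩ.subadd A _ hA (hball.smul l)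
    _ = etaOmega η A + l * etaOmega η ball := by rw [hsubΩ.homog l ball hball, abs_of_pos hl]
    _ ≤ etaOmega η A + l * (etaOmega η ball + 1) := by gcongr; linarith

end MeasureOfNonCompactness

theorem isCompact_dualBall : IsCompact (dualBall X) := by
  convert WeakDual.isCompact_closedBall (𝕜 := ℝ) (E := X) 0 1 using 1
  ext f
  simp [dualBall, dnorm]

theorem etaOmega_sublinear_general
    {X : Type*} [NormedAddCommGroup X] [NormedSpace ℝ X]
    (η : Set (WeakDual ℝ X) → ℝ)
    (hη : IsMNCOn (dualBall X) η) (hsub : IsSublinear η) :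
    IsMNCOn (dualBall X) (etaOmega η) ∧ IsSublinear (etaOmega η) :=
  ⟨isMNCOn_etaOmega isCompact_dualBall hη hsub,
    isSublinear_etaOmega hη.monotoneOn hη.union hsub⟩

/-- If `η` is a sublinear measure of non compactness on a dual Banach space `X*`,
then `η^ω` is also a sublinear measure of non compactness on `X*`. -/
theorem etaOmega_sublinear
    {X : Type*} [NormedAddCommGroup X] [NormedSpace ℝ X] [CompleteSpace X]
    (η : Set (WeakDual ℝ X) → ℝ)
    (hη : IsMNCOn (dualBall X) η) (hsub : IsSublinear η) :
    IsMNCOn (dualBall X) (etaOmega η) ∧ IsSublinear (etaOmega η) :=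
  etaOmega_sublinear_general η hη hsub

end Szlenk
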